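/- arXiv:2305.13588 — 5 statements merged into one kernel-verified Lean document; each statement's English description precedes it below -/
import Mathlib

section
/- Let k(x,y) = k̃(x,y)·a where k̃ is a complex-valued positive definite kernel on X and a ∈ A is an invertible positive element of a C*-algebra A. If the feature vectors {φ̃(x) : x ∈ X} of k̃ in its RKHS are linearly independent over ℂ, then the feature vectors {φ(x) : x ∈ X} of k in the associated RKHM over A are A-linearly independent. -/
/-- The `CStarModule` class as it stood in Mathlib of December 2024: a right `A`-module
(action of `Aᵐᵒᵖ`) with `⟪x, y <• a⟫ = ⟪x, y⟫ * a`. -/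
class OldCStarModule (A E : Type*) [NonUnitalSemiring A] [StarRing A]
    [Module ℂ A] [AddCommGroup E] [Module ℂ E] [PartialOrder A] [SMul Aᵐᵒᵖ E] [Norm A] [Norm E]
    extends Inner A E where
  inner_add_right {x} {y} {z} : inner x (y + z) = inner x y + inner x z
  inner_self_nonneg {x} : 0 ≤ inner x x
  inner_self {x} : inner x x = 0 ↔ x = 0
  inner_op_smul_right {a : A} {x y : E} : inner x (MulOpposite.op a • y) = inner x y * a
  inner_smul_right_complex {z : ℂ} {x} {y} : inner x (z • y) = z • inner x y
  star_inner x y : star (inner x y) = inner y x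
  norm_eq_sqrt_norm_inner_self x : ‖x‖ = √‖inner x x‖

/-!
Pairing the relation `∑ l, φ (x l) <• c l = 0` with each `φ (x j)` gives
`∑ l, k̃ (x j) (x l) • (a * c l) = 0`. The scalar Gram matrix of the independent vectors
`φ̃ (x l)` is invertible, so every `a * c l` vanishes, and then so does `c l` as `a` is a unit.
-/

theorem Matrix.eq_zero_of_forall_sum_smul_eq_zero {n R V : Type*} [Fintype n] [DecidableEq n]
    [CommRing R] [AddCommGroup V] [Module R V] (M : Matrix n n R) (hM : IsUnit M.det)
    (v : n → V) (h : ∀ j, ∑ l, M j l • v l = 0) : v = 0 := by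
  funext i
  calc v i = ∑ l, (M⁻¹ * M) i l • v l := by
        simp [M.nonsing_inv_mul hM, Matrix.one_apply]
    _ = ∑ j, M⁻¹ i j • ∑ l, M j l • v l := by
        simp_rw [Matrix.mul_apply, Finset.smul_sum, Finset.sum_smul, mul_smul]
        exact Finset.sum_comm
    _ = 0 := by simp [h]

namespace OldCStarModule

variable {A E : Type*} [NonUnitalRing A] [StarRing A] [Module ℂ A] [AddCommGroup E]
  [Module ℂ E] [PartialOrder A] [SMul Aᵐᵒᵖ E] [Norm A] [Norm E] [OldCStarModule A E]

def innerRight (x : E) : E →+ A :=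
  AddMonoidHom.mk' (fun y => inner A x y) fun _ _ => inner_add_right

theorem inner_sum_op_smul_right {ι : Type*} (s : Finset ι) (x : E) (c : ι → A) (y : ι → E) :
    inner A x (∑ i ∈ s, MulOpposite.op (c i) • y i) = ∑ i ∈ s, inner A x (y i) * c i := by
  simp_rw [← inner_op_smul_right]
  exact map_sum (innerRight x) _ s

theorem inner_zero_right (x : E) : inner A x (0 : E) = 0 :=
  (innerRight x).map_zero

end OldCStarModule

theorem stmt1_general {A : Type*} [CStarAlgebra A] [PartialOrder A]
    {E : Type*} [AddCommGroup E] [Module ℂ E] [Module Aᵐᵒᵖ E] [Norm E] [OldCStarModule A E]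
    {X : Type*} {H : Type*} [NormedAddCommGroup H] [InnerProductSpace ℂ H]
    (ktilde : X → X → ℂ) (phitilde : X → H)
    (hktilde : ∀ x y, ktilde x y = inner ℂ (phitilde x) (phitilde y))
    (hli : LinearIndependent ℂ phitilde)
    (a : A) (hainv : IsUnit a)
    (φ : X → E) (hk : ∀ x y, (inner A (φ x) (φ y) : A) = ktilde x y • a) :
    ∀ (n : ℕ) (x : Fin n → X), Function.Injective x → ∀ (c : Fin n → A),
      (∑ i, MulOpposite.op (c i) • φ (x i)) = 0 → ∀ i, c i = 0 := by
  intro n x hx c hc i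
  have hgram : IsUnit (Matrix.gram ℂ (phitilde ∘ x)).det :=
    isUnit_iff_ne_zero.mpr (Matrix.det_gram_ne_zero_iff_linearIndependent.mpr (hli.comp x hx))
  have hac : (fun l => a * c l) = 0 := by
    refine Matrix.eq_zero_of_forall_sum_smul_eq_zero _ hgram _ fun j => ?_
    have hj := OldCStarModule.inner_sum_op_smul_right Finset.univ (φ (x j)) c (fun l => φ (x l))
    rw [hc, OldCStarModule.inner_zero_right] at hj
    simpa [hk, hktilde, smul_mul_assoc] using hj.symm
  exact (hainv.mul_right_eq_zero).mp (congrFun hac i)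

/-- Let `k (x, y) = k̃ (x, y) • a` be a separable `A`-valued positive definite
kernel, where `k̃` is a complex-valued positive definite kernel (realized via a feature map `φ̃`
into a complex Hilbert space `H`, `k̃ x y = ⟪φ̃ x, φ̃ y⟫`) and `a ∈ A` is an invertible positive
element of the C*-algebra `A`.  If the feature vectors `{φ̃ x : x ∈ X}` are linearly independent
over `ℂ`, then the feature vectors `{φ x : x ∈ X}` of `k` in the associated reproducing kernel
Hilbert `A`-module `E` (so that `⟪φ x, φ y⟫_A = k̃ x y • a`) are `A`-linearly independent. -/
theorem stmt1 {A : Type*} [CStarAlgebra A] [PartialOrder A] [StarOrderedRing A]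
    {E : Type*} [AddCommGroup E] [Module ℂ E] [Module Aᵐᵒᵖ E] [Norm E] [OldCStarModule A E]
    {X : Type*} {H : Type*} [NormedAddCommGroup H] [InnerProductSpace ℂ H]
    (ktilde : X → X → ℂ) (phitilde : X → H)
    (hktilde : ∀ x y, ktilde x y = inner ℂ (phitilde x) (phitilde y))
    (hli : LinearIndependent ℂ phitilde)
    (a : A) (ha : 0 ≤ a) (hainv : IsUnit a)
    (φ : X → E) (hk : ∀ x y, (inner A (φ x) (φ y) : A) = ktilde x y • a) :
    ∀ (n : ℕ) (x : Fin n → X), Function.Injective x → ∀ (c : Fin n → A),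
      (∑ i, MulOpposite.op (c i) • φ (x i)) = 0 → ∀ i, c i = 0 :=
  stmt1_general ktilde phitilde hktilde hli a hainv φ hk
end

section
/- Let F₁ = {f ∈ M : ‖f‖_M ≤ B₁} be the ball of radius B₁ in an RKHM M over A = ℂ^{d×d} associated with kernel k₁, and let p ∈ ℝ^d with ‖p‖ = 1. Then the empirical Rademacher complexity of the vector-valued class F₁p = {x ↦ f(x)p : f ∈ F₁} over samples x_1,...,x_n satisfies R̂_n(x, F₁p) ≤ (B₁/n) (Σ_{i=1}^n tr k₁(x_i,x_i))^{1/2}. -/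
/-!
For a sign pattern `σ`, the Rademacher sum `f ↦ ∑ᵢ ⟨σᵢ, f(xᵢ) p⟩` is the pairing
`Re pᵀ ⟨u_σ, f⟩ p` with `u_σ = ∑ᵢ φ(xᵢ) · (σᵢ pᵀ)`. The form `Re pᵀ ⟨·, ·⟩ p` is a real
semi-inner product on `M`, so Cauchy–Schwarz bounds the supremum over the ball by
`B₁ (Re pᵀ ⟨u_σ, u_σ⟩ p)^{1/2}`, because `Re pᵀ ⟨f, f⟩ p ≤ ‖⟨f, f⟩‖` for a unit vector `p`.
Jensen moves the average over `σ` inside the square root, and since distinct Rademacher signs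
are orthogonal, the average of `Re pᵀ ⟨u_σ, u_σ⟩ p = ∑ᵢⱼ σᵢᵀ (Re k₁(xᵢ, xⱼ)) σⱼ` is
`∑ᵢ Re tr k₁(xᵢ, xᵢ)`.
-/

open Matrix ComplexOrder
open scoped Matrix.Norms.L2Operator

open Finset

section RademacherSigns

variable {κ : Type*} [Fintype κ] [DecidableEq κ]

lemma sum_sign_mul_sign (a b : κ) :
    ∑ σ : κ → Bool, (if σ a then (1 : ℝ) else -1) * (if σ b then 1 else -1) =
      if a = b then 2 ^ Fintype.card κ else 0 := by
  split_ifs with hab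
  · subst hab
    have hsq : ∀ σ : κ → Bool, (if σ a then (1 : ℝ) else -1) * (if σ a then 1 else -1) = 1 := by
      intro σ; cases σ a <;> norm_num
    simp [hsq]
  · -- split off the coordinate `b`, in which the summand is odd
    rw [← (Equiv.funSplitAt b Bool).symm.sum_comp, Fintype.sum_prod_type]
    simp [Equiv.funSplitAt, Equiv.piSplitAt, hab]

lemma sum_sign_quadratic (K : κ → κ → ℝ) :
    ∑ σ : κ → Bool, ∑ a, ∑ b,
        (if σ a then (1 : ℝ) else -1) * (if σ b then 1 else -1) * K a b =
      2 ^ Fintype.card κ * ∑ a, K a a := by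
  rw [Finset.sum_comm]
  simp_rw [Finset.sum_comm (γ := κ → Bool) (s := univ), ← Finset.sum_mul, sum_sign_mul_sign]
  simp [Finset.mul_sum]

lemma sum_sign_quadratic_curry {α β : Type*} [Fintype α] [DecidableEq α] [Fintype β]
    [DecidableEq β] (K : α → β → α → β → ℝ) :
    ∑ σ : α → β → Bool, ∑ i, ∑ m, ∑ j, ∑ m',
        (if σ i m then (1 : ℝ) else -1) * (if σ j m' then 1 else -1) * K i m j m' =
      2 ^ (Fintype.card α * Fintype.card β) * ∑ i, ∑ m, K i m i m := by
  have := sum_sign_quadratic fun a b : α × β => K a.1 a.2 b.1 b.2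
  simp only [Fintype.sum_prod_type, Fintype.card_prod] at this
  rw [← this, ← (Equiv.curry α β Bool).sum_comp]
  rfl

end RademacherSigns

namespace Real

lemma le_sqrt_mul_sqrt_of_quadratic_nonneg {a b c : ℝ} (ha : 0 ≤ a)
    (h : ∀ t, 0 ≤ a * (t * t) + 2 * b * t + c) : b ≤ √a * √c := by
  have hdisc := discrim_le_zero h
  rw [discrim] at hdisc
  rw [← sqrt_mul ha]
  exact (le_abs_self b).trans (abs_le_sqrt (by nlinarith))

lemma inv_card_mul_sum_sqrt_le {Ω : Type*} [Fintype Ω] {g : Ω → ℝ} (hg : ∀ ω, 0 ≤ g ω) :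
    (Fintype.card Ω : ℝ)⁻¹ * ∑ ω, √(g ω) ≤ √((Fintype.card Ω : ℝ)⁻¹ * ∑ ω, g ω) := by
  have hcs := sum_sqrt_mul_sqrt_le univ (fun _ => zero_le_one) hg
  simp only [sqrt_one, one_mul, sum_const, card_univ, nsmul_eq_mul, mul_one] at hcs
  set N : ℝ := (Fintype.card Ω : ℝ)
  calc N⁻¹ * ∑ ω, √(g ω) ≤ N⁻¹ * (√N * √(∑ ω, g ω)) := by gcongr
    _ = √(N⁻¹) * √(∑ ω, g ω) := by
        rw [← mul_assoc, sqrt_inv, inv_mul_eq_div, sqrt_div_self', one_div]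
    _ = _ := (sqrt_mul (inv_nonneg.2 (Nat.cast_nonneg _)) _).symm

end Real

namespace Matrix

variable {ι : Type*} [Fintype ι]

lemma star_dotProduct_conjTranspose_mul_mulVec (A G : Matrix ι ι ℂ) (v w : ι → ℂ) :
    star v ⬝ᵥ (Aᴴ * G) *ᵥ w = star (A *ᵥ v) ⬝ᵥ G *ᵥ w := by
  rw [← mulVec_mulVec, dotProduct_mulVec, star_mulVec]

lemma vecMulVec_star_mulVec {v : ι → ℂ} (hv : star v ⬝ᵥ v = 1) (u : ι → ℂ) :
    vecMulVec u (star v) *ᵥ v = u := by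
  rw [vecMulVec_mulVec, hv, MulOpposite.op_one, one_smul]

lemma re_ofReal_dotProduct (a : ι → ℝ) (w : ι → ℂ) :
    ((fun m => (a m : ℂ)) ⬝ᵥ w).re = ∑ m, a m * (w m).re := by
  simp [dotProduct, Complex.re_sum]

lemma re_star_dotProduct_mulVec_le_l2_opNorm [DecidableEq ι] {v : ι → ℂ}
    (hv : star v ⬝ᵥ v = 1) (G : Matrix ι ι ℂ) : (star v ⬝ᵥ G *ᵥ v).re ≤ ‖G‖ := by
  set x : EuclideanSpace ℂ ι := WithLp.toLp 2 v
  have hx : ‖x‖ = 1 := by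
    have hsq : ‖x‖ ^ 2 = 1 ^ 2 := by
      rw [@norm_sq_eq_re_inner ℂ, EuclideanSpace.inner_toLp_toLp, dotProduct_comm, hv]
      simp
    exact (sq_eq_sq₀ (norm_nonneg _) zero_le_one).1 hsq
  calc (star v ⬝ᵥ G *ᵥ v).re ≤ ‖inner ℂ x (WithLp.toLp 2 (G *ᵥ v))‖ := by
        rw [EuclideanSpace.inner_toLp_toLp, dotProduct_comm]
        exact Complex.re_le_norm _
    _ ≤ ‖x‖ * (‖G‖ * ‖x‖) := (norm_inner_le_norm _ _).trans
        (mul_le_mul_of_nonneg_left (G.l2_opNorm_mulVec x) (norm_nonneg _))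
    _ = ‖G‖ := by rw [hx, one_mul, mul_one]

end Matrix

structure IsMatrixSesquilinear {ι M : Type*} [Fintype ι] [DecidableEq ι] [AddCommGroup M]
    [Module (Matrix ι ι ℂ)ᵐᵒᵖ M] (mI : M → M → Matrix ι ι ℂ) : Prop where
  add_right : ∀ x y z, mI x (y + z) = mI x y + mI x z
  op_smul_right : ∀ (a : Matrix ι ι ℂ) x y, mI x (MulOpposite.op a • y) = mI x y * a
  star_eq : ∀ x y, star (mI x y) = mI y x

namespace IsMatrixSesquilinear

variable {ι M : Type*} [Fintype ι] [DecidableEq ι] [AddCommGroup M] [Module (Matrix ι ι ℂ)ᵐᵒᵖ M]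
  {mI : M → M → Matrix ι ι ℂ}

lemma add_left (hm : IsMatrixSesquilinear mI) (x y z : M) :
    mI (x + y) z = mI x z + mI y z := by
  rw [← hm.star_eq, hm.add_right, star_add, hm.star_eq, hm.star_eq]

lemma op_smul_left (hm : IsMatrixSesquilinear mI) (a : Matrix ι ι ℂ) (x y : M) :
    mI (MulOpposite.op a • x) y = aᴴ * mI x y := by
  rw [← hm.star_eq, hm.op_smul_right, star_mul, hm.star_eq, star_eq_conjTranspose]

lemma zero_right (hm : IsMatrixSesquilinear mI) (x : M) : mI x 0 = 0 :=
  map_zero (AddMonoidHom.mk' (mI x) (hm.add_right x))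

lemma sum_right (hm : IsMatrixSesquilinear mI) {κ : Type*} (s : Finset κ) (x : M) (y : κ → M) :
    mI x (∑ i ∈ s, y i) = ∑ i ∈ s, mI x (y i) :=
  map_sum (AddMonoidHom.mk' (mI x) (hm.add_right x)) y s

lemma sum_left (hm : IsMatrixSesquilinear mI) {κ : Type*} (s : Finset κ) (x : κ → M) (y : M) :
    mI (∑ i ∈ s, x i) y = ∑ i ∈ s, mI (x i) y := by
  rw [← hm.star_eq, hm.sum_right, star_sum]
  simp only [hm.star_eq]

end IsMatrixSesquilinear

section CompressedInner

variable {ι M : Type*} [Fintype ι] {mI : M → M → Matrix ι ι ℂ}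

def compressedInner (mI : M → M → Matrix ι ι ℂ) (v : ι → ℂ) (a b : M) : ℝ :=
  (star v ⬝ᵥ mI a b *ᵥ v).re

lemma compressedInner_self_nonneg (hpos : ∀ x, (mI x x).PosSemidef) (v : ι → ℂ) (a : M) :
    0 ≤ compressedInner mI v a a :=
  (Complex.nonneg_iff.1 ((hpos a).dotProduct_mulVec_nonneg v)).1

variable [DecidableEq ι]

lemma compressedInner_self_le_norm {v : ι → ℂ} (hv : star v ⬝ᵥ v = 1) (a : M) :
    compressedInner mI v a a ≤ ‖mI a a‖ :=
  re_star_dotProduct_mulVec_le_l2_opNorm hv _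

variable [AddCommGroup M] [Module (Matrix ι ι ℂ)ᵐᵒᵖ M]

lemma compressedInner_comm (hm : IsMatrixSesquilinear mI) (v : ι → ℂ) (a b : M) :
    compressedInner mI v a b = compressedInner mI v b a := by
  rw [compressedInner, compressedInner, ← hm.star_eq, star_eq_conjTranspose, dotProduct_mulVec,
    ← star_mulVec, star_dotProduct, Complex.star_def, Complex.conj_re]

lemma compressedInner_add_real_smul_self (hm : IsMatrixSesquilinear mI) (v : ι → ℂ) (a b : M)
    (t : ℝ) :
    compressedInner mI v (b + MulOpposite.op (t • 1 : Matrix ι ι ℂ) • a)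
        (b + MulOpposite.op (t • 1 : Matrix ι ι ℂ) • a) =
      compressedInner mI v a a * (t * t) + 2 * compressedInner mI v a b * t +
        compressedInner mI v b b := by
  have hba := compressedInner_comm hm v b a
  simp only [compressedInner] at hba ⊢
  simp only [hm.add_left, hm.add_right, hm.op_smul_left, hm.op_smul_right, conjTranspose_smul,
    conjTranspose_one, star_trivial, Matrix.smul_mul, Matrix.mul_smul, one_mul, mul_one,
    add_mulVec, smul_mulVec, dotProduct_add, dotProduct_smul, Complex.add_re, Complex.smul_re,
    smul_eq_mul, hba]
  ring

lemma compressedInner_le_sqrt_mul_sqrt (hm : IsMatrixSesquilinear mI)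
    (hpos : ∀ x, (mI x x).PosSemidef) (v : ι → ℂ) (a b : M) :
    compressedInner mI v a b ≤ √(compressedInner mI v a a) * √(compressedInner mI v b b) :=
  Real.le_sqrt_mul_sqrt_of_quadratic_nonneg (compressedInner_self_nonneg hpos v a) fun t => by
    rw [← compressedInner_add_real_smul_self hm]
    exact compressedInner_self_nonneg hpos v _

end CompressedInner

section Representer

variable {ι κ M : Type*} [Fintype ι] [DecidableEq ι] [Fintype κ] [AddCommGroup M]
  [Module (Matrix ι ι ℂ)ᵐᵒᵖ M] {mI : M → M → Matrix ι ι ℂ}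

def representer (φ : κ → M) (v : ι → ℂ) (e : κ → ι → ℝ) : M :=
  ∑ i, MulOpposite.op (vecMulVec (fun m => (e i m : ℂ)) (star v)) • φ i

lemma compressedInner_representer_left (hm : IsMatrixSesquilinear mI) {v : ι → ℂ}
    (hv : star v ⬝ᵥ v = 1) (φ : κ → M) (e : κ → ι → ℝ) (f : M) :
    compressedInner mI v (representer φ v e) f = ∑ i, ∑ m, e i m * ((mI (φ i) f *ᵥ v) m).re := by
  simp only [compressedInner, representer, hm.sum_left, hm.op_smul_left, sum_mulVec,
    dotProduct_sum, Complex.re_sum, star_dotProduct_conjTranspose_mul_mulVec,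
    vecMulVec_star_mulVec hv]
  refine sum_congr rfl fun i _ => ?_
  rw [← re_ofReal_dotProduct]
  congr 2
  ext m
  simp

lemma compressedInner_representer_self (hm : IsMatrixSesquilinear mI) {v : ι → ℂ}
    (hv : star v ⬝ᵥ v = 1) (φ : κ → M) (e : κ → ι → ℝ) :
    compressedInner mI v (representer φ v e) (representer φ v e) =
      ∑ i, ∑ m, ∑ j, ∑ m', e i m * e j m' * (mI (φ i) (φ j) m m').re := by
  rw [compressedInner_representer_left hm hv]
  refine sum_congr rfl fun i _ => sum_congr rfl fun m _ => ?_
  simp only [representer, hm.sum_right, hm.op_smul_right, sum_mulVec, ← mulVec_mulVec,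
    vecMulVec_star_mulVec hv, Finset.sum_apply, Complex.re_sum, mul_sum]
  refine sum_congr rfl fun j _ => ?_
  simp only [mulVec, dotProduct, Complex.re_sum, mul_sum, Complex.re_mul_ofReal]
  exact sum_congr rfl fun m' _ => by ring

lemma ciSup_ball_le_representer (hm : IsMatrixSesquilinear mI) (hpos : ∀ x, (mI x x).PosSemidef)
    {v : ι → ℂ} (hv : star v ⬝ᵥ v = 1) (φ : κ → M) (e : κ → ι → ℝ) {B c : ℝ} (hB : 0 ≤ B)
    (hc : 0 ≤ c) :
    ⨆ f : {f : M // √‖mI f f‖ ≤ B}, c * ∑ i, ∑ m, e i m * ((mI (φ i) f *ᵥ v) m).re ≤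
      c * (B * √(compressedInner mI v (representer φ v e) (representer φ v e))) := by
  have : Nonempty {f : M // √‖mI f f‖ ≤ B} := ⟨⟨0, by simpa [hm.zero_right] using hB⟩⟩
  refine ciSup_le fun ⟨f, hfB⟩ => mul_le_mul_of_nonneg_left ?_ hc
  rw [← compressedInner_representer_left hm hv, mul_comm B]
  have hf : √(compressedInner mI v f f) ≤ B :=
    (Real.sqrt_le_sqrt (compressedInner_self_le_norm hv f)).trans hfB
  exact (compressedInner_le_sqrt_mul_sqrt hm hpos v _ _).trans (by gcongr)

end Representer

theorem stmt7_general {d n : ℕ} {X : Type*} {M : Type*} [AddCommGroup M]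
    [Module (Matrix (Fin d) (Fin d) ℂ)ᵐᵒᵖ M]
    (mI : M → M → Matrix (Fin d) (Fin d) ℂ)
    (h_add : ∀ x y z, mI x (y + z) = mI x y + mI x z)
    (h_opsmul : ∀ (a : Matrix (Fin d) (Fin d) ℂ) (x y : M),
      mI x (MulOpposite.op a • y) = mI x y * a)
    (h_star : ∀ x y, star (mI x y) = mI y x)
    (h_pos : ∀ x, (mI x x).PosSemidef)
    (k₁ : X → X → Matrix (Fin d) (Fin d) ℂ) (φ : X → M)
    (hk : ∀ x y, mI (φ x) (φ y) = k₁ x y)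
    (B₁ : ℝ) (hB₁ : 0 ≤ B₁)
    (p : Fin d → ℝ) (hp : ∑ l, p l ^ 2 = 1)
    (x : Fin n → X) :
    ((2 : ℝ) ^ (n * d))⁻¹ *
      (∑ σ : Fin n → Fin d → Bool,
        ⨆ f : {f : M // Real.sqrt ‖mI f f‖ ≤ B₁},
          (1 / (n : ℝ)) * ∑ i, ∑ l, (if σ i l then (1 : ℝ) else -1) *
            (((mI (φ (x i)) (f : M)).mulVec (fun l' => (p l' : ℂ))) l).re) ≤
    (B₁ / n) * Real.sqrt (∑ i, (Matrix.trace (k₁ (x i) (x i))).re) := by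
  set v : Fin d → ℂ := fun l => (p l : ℂ)
  have hv : star v ⬝ᵥ v = 1 := by
    simp only [v, dotProduct, Pi.star_apply, Complex.star_def, Complex.conj_ofReal]
    exact_mod_cast (by simpa [sq] using hp)
  have hm : IsMatrixSesquilinear mI := ⟨h_add, h_opsmul, h_star⟩
  set ε : (Fin n → Fin d → Bool) → Fin n → Fin d → ℝ := fun σ i l => if σ i l then 1 else -1
  set u := fun σ => representer (fun i => φ (x i)) v (ε σ)
  set Q := fun σ => compressedInner mI v (u σ) (u σ)
  have hcard : (Fintype.card (Fin n → Fin d → Bool) : ℝ) = 2 ^ (n * d) := by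
    simp [← pow_mul, mul_comm]
  have hmean : ((2 : ℝ) ^ (n * d))⁻¹ * ∑ σ, Q σ = ∑ i, (k₁ (x i) (x i)).trace.re := by
    simp only [Q, u, compressedInner_representer_self hm hv, hk, ε]
    rw [sum_sign_quadratic_curry, Fintype.card_fin, Fintype.card_fin,
      inv_mul_cancel_left₀ (by positivity)]
    simp [trace, Complex.re_sum]
  calc _ ≤ ((2 : ℝ) ^ (n * d))⁻¹ * ∑ σ, (1 / (n : ℝ)) * (B₁ * √(Q σ)) := by
        gcongr with σ
        exact ciSup_ball_le_representer hm h_pos hv _ (ε σ) hB₁ (by positivity)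
    _ = B₁ / n * ((Fintype.card (Fin n → Fin d → Bool) : ℝ)⁻¹ * ∑ σ, √(Q σ)) := by
        rw [hcard, ← mul_sum, ← mul_sum]
        ring
    _ ≤ B₁ / n * √((Fintype.card (Fin n → Fin d → Bool) : ℝ)⁻¹ * ∑ σ, Q σ) := by
        gcongr
        exact Real.inv_card_mul_sum_sqrt_le fun σ => compressedInner_self_nonneg h_pos v _
    _ = _ := by rw [hcard, hmean]

/-- Let `F₁ = {f ∈ M : ‖f‖_M ≤ B₁}` be the ball of radius `B₁` in the RKHM `M`
over `A = ℂ^{d×d}` associated with the kernel `k₁` (feature map `φ`, reproducing property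
`f(x) = ⟪φ x, f⟫_M`), and let `p ∈ ℝ^d` be a unit vector.  Then the empirical Rademacher
complexity (the expectation over uniform sign patterns `σ : Fin n → Fin d → Bool` of the
supremum over `f ∈ F₁` of `(1/n) ∑ᵢ ⟨σᵢ, f(xᵢ)p⟩`) of the vector-valued class
`F₁ p = {x ↦ f(x) p}` over samples `x₁,…,xₙ` satisfies
`R̂_n(x, F₁p) ≤ (B₁/n) (∑ᵢ tr k₁(xᵢ,xᵢ))^{1/2}`. -/
theorem stmt7 {d n : ℕ} {X : Type*} {M : Type*} [AddCommGroup M] [Module ℂ M]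
    [Module (Matrix (Fin d) (Fin d) ℂ)ᵐᵒᵖ M]
    (mI : M → M → Matrix (Fin d) (Fin d) ℂ)
    (h_add : ∀ x y z, mI x (y + z) = mI x y + mI x z)
    (h_smul : ∀ (z : ℂ) (x y : M), mI x (z • y) = z • mI x y)
    (h_opsmul : ∀ (a : Matrix (Fin d) (Fin d) ℂ) (x y : M),
      mI x (MulOpposite.op a • y) = mI x y * a)
    (h_star : ∀ x y, star (mI x y) = mI y x)
    (h_pos : ∀ x, (mI x x).PosSemidef)
    (k₁ : X → X → Matrix (Fin d) (Fin d) ℂ) (φ : X → M)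
    (hk : ∀ x y, mI (φ x) (φ y) = k₁ x y)
    (B₁ : ℝ) (hB₁ : 0 ≤ B₁)
    (p : Fin d → ℝ) (hp : ∑ l, p l ^ 2 = 1)
    (x : Fin n → X) :
    ((2 : ℝ) ^ (n * d))⁻¹ *
      (∑ σ : Fin n → Fin d → Bool,
        ⨆ f : {f : M // Real.sqrt ‖mI f f‖ ≤ B₁},
          (1 / (n : ℝ)) * ∑ i, ∑ l, (if σ i l then (1 : ℝ) else -1) *
            (((mI (φ (x i)) (f : M)).mulVec (fun l' => (p l' : ℂ))) l).re) ≤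
    (B₁ / n) * Real.sqrt (∑ i, (Matrix.trace (k₁ (x i) (x i))).re) :=
  stmt7_general mI h_add h_opsmul h_star h_pos k₁ φ hk B₁ hB₁ p hp x
end

section
/- (Deep RKHM representer theorem) Let h : A^n → ℝ₊ be any error function, g₁ an ℝ₊-valued function on bounded linear operators on M̃₁, and g₂ : ℝ₊ → ℝ₊ monotone (g₂(a) ≤ g₂(b) whenever a ≤ b). If the minimization of h(f_L∘⋯∘f_1(x_1), ..., f_L∘⋯∘f_1(x_n)) + g₁(P_{f_{L-1}}⋯P_{f_1}|_{Ṽ(x)}) + g₂(‖f_L‖_{M_L}) over f_j ∈ M_j has a solution, then it has a solution in which each f_j admits the representation f_j = Σ_{i=1}^n φ_j(x_i^{j-1}) c_{i,j} for some c_{i,j} ∈ A, where x_i^j = f_j∘⋯∘f_1(x_i) and x_i^0 = x_i. -/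
open Matrix ComplexOrder
open scoped Matrix.Norms.L2Operator

/-- Iterated composition: `iterSeq g m = g (m-1) ∘ ⋯ ∘ g 0`. -/
def iterSeq {α : Type*} (g : ℕ → α → α) : ℕ → α → α
  | 0 => id
  | m + 1 => fun a => g m (iterSeq g m a)

/-!
Take a minimiser and project each layer `f j`, in the `A`-valued sense, onto the submodule
generated by the features `φ j (x i ^ j)` of the minimiser's own intermediate outputs. The
projection has the same `A`-valued inner products with these features, so by induction on the
layer every intermediate output, hence the error term and the Perron–Frobenius term, is
unchanged, while `‖f (L-1)‖` does not increase (Pythagoras and monotonicity of the C⋆-norm on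
positive matrices). By monotonicity of `g₂` the projected tuple is again a minimiser.

The `A`-valued projection is the ordinary orthogonal projection for the complex inner product
`tr (mI x y)`.
-/

open MulOpposite
open scoped InnerProductSpace

structure IsMatrixInnerProduct {m E : Type*} [Fintype m] [DecidableEq m] [AddCommGroup E]
    [Module ℂ E] [Module (Matrix m m ℂ)ᵐᵒᵖ E] (mI : E → E → Matrix m m ℂ) : Prop where
  add_right : ∀ x y z : E, mI x (y + z) = mI x y + mI x z
  smul_right : ∀ (c : ℂ) (x y : E), mI x (c • y) = c • mI x y
  op_smul_right : ∀ (a : Matrix m m ℂ) (x y : E), mI x (op a • y) = mI x y * a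
  star_inner : ∀ x y : E, star (mI x y) = mI y x
  posSemidef_self : ∀ x : E, (mI x x).PosSemidef
  eq_zero_of_self_eq_zero : ∀ x : E, mI x x = 0 → x = 0

namespace IsMatrixInnerProduct

variable {m E : Type*} [Fintype m] [DecidableEq m] [AddCommGroup E] [Module ℂ E]
  [Module (Matrix m m ℂ)ᵐᵒᵖ E] {mI : E → E → Matrix m m ℂ}

def addMonoidHomRight (hI : IsMatrixInnerProduct mI) (x : E) : E →+ Matrix m m ℂ :=
  AddMonoidHom.mk' (mI x) (hI.add_right x)

lemma sub_right (hI : IsMatrixInnerProduct mI) (x y z : E) :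
    mI x (y - z) = mI x y - mI x z :=
  map_sub (hI.addMonoidHomRight x) y z

lemma sum_right (hI : IsMatrixInnerProduct mI) {ι : Type*} (s : Finset ι) (x : E) (v : ι → E) :
    mI x (∑ k ∈ s, v k) = ∑ k ∈ s, mI x (v k) :=
  map_sum (hI.addMonoidHomRight x) v s

lemma add_left (hI : IsMatrixInnerProduct mI) (x y z : E) :
    mI (x + y) z = mI x z + mI y z := by
  rw [← hI.star_inner, hI.add_right, star_add, hI.star_inner, hI.star_inner]

lemma smul_left (hI : IsMatrixInnerProduct mI) (c : ℂ) (x y : E) :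
    mI (c • x) y = star c • mI x y := by
  rw [← hI.star_inner, hI.smul_right, star_smul, hI.star_inner]

lemma op_smul_left (hI : IsMatrixInnerProduct mI) (a : Matrix m m ℂ) (x y : E) :
    mI (op a • x) y = aᴴ * mI x y := by
  rw [← hI.star_inner, hI.op_smul_right, star_mul, hI.star_inner, Matrix.star_eq_conjTranspose]

lemma sum_left (hI : IsMatrixInnerProduct mI) {ι : Type*} (s : Finset ι) (v : ι → E) (y : E) :
    mI (∑ k ∈ s, v k) y = ∑ k ∈ s, mI (v k) y := by
  rw [← hI.star_inner, hI.sum_right, star_sum]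
  simp only [hI.star_inner]

lemma ext_left (hI : IsMatrixInnerProduct mI) {y z : E} (h : ∀ x, mI x y = mI x z) : y = z :=
  sub_eq_zero.mp <| hI.eq_zero_of_self_eq_zero _ <| by rw [hI.sub_right, h, sub_self]

lemma smul_op_smul (hI : IsMatrixInnerProduct mI) (c : ℂ) (a : Matrix m m ℂ) (y : E) :
    c • op a • y = op (c • a) • y :=
  hI.ext_left fun x => by
    rw [hI.smul_right, hI.op_smul_right, hI.op_smul_right, Matrix.mul_smul]

noncomputable abbrev traceCore (hI : IsMatrixInnerProduct mI) : InnerProductSpace.Core ℂ E where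
  inner x y := (mI x y).trace
  conj_inner_symm x y := by
    rw [← Complex.star_def, ← Matrix.trace_conjTranspose, ← Matrix.star_eq_conjTranspose,
      hI.star_inner]
  re_inner_nonneg x := (Complex.nonneg_iff.mp (hI.posSemidef_self x).trace_nonneg).1
  add_left x y z := by rw [hI.add_left, Matrix.trace_add]
  smul_left x y c := by rw [hI.smul_left, Matrix.trace_smul, smul_eq_mul]; rfl
  definite x hx := hI.eq_zero_of_self_eq_zero x ((hI.posSemidef_self x).trace_eq_zero_iff.mp hx)

noncomputable def combination (hI : IsMatrixInnerProduct mI) {ι : Type*} [Fintype ι]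
    (v : ι → E) : (ι → Matrix m m ℂ) →ₗ[ℂ] E where
  toFun c := ∑ k, op (c k) • v k
  map_add' c c' := by simp only [Pi.add_apply, op_add, add_smul, Finset.sum_add_distrib]
  map_smul' z c := by simp only [Pi.smul_apply, Finset.smul_sum, hI.smul_op_smul, RingHom.id_apply]

lemma exists_inner_sub_sum_eq_zero (hI : IsMatrixInnerProduct mI) {ι : Type*} [Fintype ι]
    (v : ι → E) (f : E) :
    ∃ c : ι → Matrix m m ℂ, ∀ i, mI (v i) (f - ∑ k, op (c k) • v k) = 0 := by
  classical
  let _ : NormedAddCommGroup E := hI.traceCore.toNormedAddCommGroup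
  let _ : InnerProductSpace ℂ E := InnerProductSpace.ofCore hI.traceCore.toCore
  let W := LinearMap.range (hI.combination v)
  obtain ⟨c, hc⟩ : W.starProjection f ∈ W := W.starProjection_apply_mem f
  refine ⟨c, fun i => ?_⟩
  set M := mI (v i) (f - ∑ k, op (c k) • v k)
  -- `f - W.starProjection f` is `ℂ`-orthogonal to `op M • v i`, i.e. `tr (Mᴴ M) = 0`
  have hM : op M • v i ∈ W :=
    ⟨Pi.single i M, by simp [combination, Pi.single_apply, apply_ite op, ite_smul]⟩
  have horth : (mI (op M • v i) (f - W.starProjection f)).trace = 0 :=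
    (W.mem_orthogonal _).mp (W.sub_starProjection_mem_orthogonal f) _ hM
  rw [← hc, hI.op_smul_left] at horth
  exact Matrix.trace_conjTranspose_mul_self_eq_zero_iff.mp horth

open scoped MatrixOrder in
lemma norm_self_le_of_inner_sub_eq_zero (hI : IsMatrixInnerProduct mI) {p f : E}
    (h : mI p (f - p) = 0) : ‖mI p p‖ ≤ ‖mI f f‖ := by
  have h' : mI (f - p) p = 0 := by rw [← hI.star_inner, h, star_zero]
  have hpyth : mI f f - mI p p = mI (f - p) (f - p) := by
    conv_lhs => rw [← sub_add_cancel f p]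
    rw [hI.add_left, hI.add_right, hI.add_right, h, h']
    abel
  refine CStarAlgebra.norm_le_norm_of_nonneg_of_le (hI.posSemidef_self p).nonneg ?_
  rw [Matrix.le_iff, hpyth]
  exact hI.posSemidef_self _

lemma exists_sum_inner_eq_and_norm_le (hI : IsMatrixInnerProduct mI) {ι : Type*} [Fintype ι]
    (v : ι → E) (f : E) :
    ∃ c : ι → Matrix m m ℂ, (∀ i, mI (v i) (∑ k, op (c k) • v k) = mI (v i) f) ∧
      ‖mI (∑ k, op (c k) • v k) (∑ k, op (c k) • v k)‖ ≤ ‖mI f f‖ := by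
  obtain ⟨c, hc⟩ := hI.exists_inner_sub_sum_eq_zero v f
  refine ⟨c, fun i => (sub_eq_zero.mp (by rw [← hI.sub_right, hc])).symm,
    hI.norm_self_le_of_inner_sub_eq_zero ?_⟩
  rw [hI.sum_left]
  exact Finset.sum_eq_zero fun k _ => by rw [hI.op_smul_left, hc, Matrix.mul_zero]

end IsMatrixInnerProduct

lemma iterSeq_congr {α : Type*} {g g' : ℕ → α → α} {a : α} {n : ℕ}
    (h : ∀ j < n, g j (iterSeq g j a) = g' j (iterSeq g j a)) :
    iterSeq g n a = iterSeq g' n a := by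
  induction n with
  | zero => rfl
  | succ n ih =>
    change g n (iterSeq g n a) = g' n (iterSeq g' n a)
    rw [← ih fun j hj => h j (hj.trans n.lt_succ_self), h n n.lt_succ_self]

theorem stmt11_general {d n L : ℕ}
    {E : ℕ → Type*} [∀ j, AddCommGroup (E j)] [∀ j, Module ℂ (E j)]
    [∀ j, Module (Matrix (Fin d) (Fin d) ℂ)ᵐᵒᵖ (E j)]
    (mI : ∀ j, E j → E j → Matrix (Fin d) (Fin d) ℂ)
    (h_add : ∀ j (x y z : E j), mI j x (y + z) = mI j x y + mI j x z)
    (h_smul : ∀ j (z : ℂ) (x y : E j), mI j x (z • y) = z • mI j x y)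
    (h_opsmul : ∀ j (a : Matrix (Fin d) (Fin d) ℂ) (x y : E j),
      mI j x (MulOpposite.op a • y) = mI j x y * a)
    (h_star : ∀ j (x y : E j), star (mI j x y) = mI j y x)
    (h_pos : ∀ j (x : E j), (mI j x x).PosSemidef)
    (h_def : ∀ j (x : E j), mI j x x = 0 → x = 0)
    (φ : ∀ j, Matrix (Fin d) (Fin d) ℂ → E j)
    (x : Fin n → Matrix (Fin d) (Fin d) ℂ)
    (h : (Fin n → Matrix (Fin d) (Fin d) ℂ) → ℝ)
    (g₁ : (E 0 →ₗ[ℂ] E (L - 1)) → ℝ)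
    (g₂ : ℝ → ℝ)
    (hg₂mono : ∀ a b : ℝ, 0 ≤ a → a ≤ b → g₂ a ≤ g₂ b)
    (Pf : (∀ j, E j) → (E 0 →ₗ[ℂ] E (L - 1)))
    (hPf : ∀ (f : ∀ j, E j) (i : Fin n),
      Pf f (φ 0 (x i)) =
        φ (L - 1) (iterSeq (fun j a => mI j (φ j a) (f j)) (L - 1) (x i)))
    (hPdet : ∀ f f' : ∀ j, E j,
      (∀ i, Pf f (φ 0 (x i)) = Pf f' (φ 0 (x i))) → Pf f = Pf f')
    (obj : (∀ j, E j) → ℝ)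
    (hobj : ∀ f, obj f =
      h (fun i => iterSeq (fun j a => mI j (φ j a) (f j)) L (x i)) +
        g₁ (Pf f) + g₂ (Real.sqrt ‖mI (L - 1) (f (L - 1)) (f (L - 1))‖))
    (hexists : ∃ fmin, ∀ f, obj fmin ≤ obj f) :
    ∃ fstar : ∀ j, E j, (∀ f, obj fstar ≤ obj f) ∧
      ∀ j < L, ∃ c : Fin n → Matrix (Fin d) (Fin d) ℂ,
        fstar j = ∑ i, MulOpposite.op (c i) •
          φ j (iterSeq (fun j' a => mI j' (φ j' a) (fstar j')) j (x i)) := by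
  obtain ⟨fmin, hfmin⟩ := hexists
  have hI j : IsMatrixInnerProduct (mI j) :=
    ⟨h_add j, h_smul j, h_opsmul j, h_star j, h_pos j, h_def j⟩
  choose c hc_inner hc_norm using fun j =>
    (hI j).exists_sum_inner_eq_and_norm_le
      (fun i => φ j (iterSeq (fun j a => mI j (φ j a) (fmin j)) j (x i))) (fmin j)
  let fstar : ∀ j, E j := fun j =>
    ∑ k, op (c j k) • φ j (iterSeq (fun j a => mI j (φ j a) (fmin j)) j (x k))
  have houtputs (m : ℕ) (i : Fin n) : iterSeq (fun j a => mI j (φ j a) (fstar j)) m (x i) =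
      iterSeq (fun j a => mI j (φ j a) (fmin j)) m (x i) :=
    (iterSeq_congr fun j _ => (hc_inner j i).symm).symm
  have hPf_eq : Pf fstar = Pf fmin := hPdet _ _ fun i => by rw [hPf, hPf, houtputs]
  refine ⟨fstar, fun f => le_trans ?_ (hfmin f), fun j _ => ⟨c j, ?_⟩⟩
  · rw [hobj, hobj, hPf_eq]
    simp only [houtputs]
    gcongr
    exact hg₂mono _ _ (Real.sqrt_nonneg _) (Real.sqrt_le_sqrt (hc_norm (L - 1)))
  · simp only [fstar, houtputs]

/-- Deep RKHM representer theorem.  Layers are numbered `0,…,L-1`; `E j` is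
the RKHM of layer `j` over `A = ℂ^{d×d}` with `A`-valued inner product `mI j` and feature map
`φ j : A → E j`; the function associated with `f_j ∈ E j` is `a ↦ ⟪φ j a, f j⟫` and
`x i ^ j = iterSeq … j (x i)` are the intermediate outputs.  `Pf f` is the composed
Perron–Frobenius operator `P_{f_{L-1}} ⋯ P_{f_1}` restricted to the submodule `Ṽ(x)` generated
by `φ 0 (x 1), …, φ 0 (x n)`: it maps `φ 0 (x i)` to `φ (L-1) (x i ^ {L-1})` and is determined
by these values.  Let `h : A^n → ℝ₊` be an error function, `g₁` an `ℝ₊`-valued function on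
operators on `M̃₁`, and `g₂ : ℝ₊ → ℝ₊` monotone.  If the minimization of
`h(outputs) + g₁(Pf f) + g₂(‖f_{L-1}‖)` over tuples `f` has a solution, then it has a solution
in which each `f j` (`j < L`) is of the form `∑ i, φ j (x i ^ j) c i` for some `c i ∈ A`. -/
theorem stmt11 {d n L : ℕ} (hL : 1 ≤ L)
    {E : ℕ → Type*} [∀ j, AddCommGroup (E j)] [∀ j, Module ℂ (E j)]
    [∀ j, Module (Matrix (Fin d) (Fin d) ℂ)ᵐᵒᵖ (E j)]
    (mI : ∀ j, E j → E j → Matrix (Fin d) (Fin d) ℂ)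
    (h_add : ∀ j (x y z : E j), mI j x (y + z) = mI j x y + mI j x z)
    (h_smul : ∀ j (z : ℂ) (x y : E j), mI j x (z • y) = z • mI j x y)
    (h_opsmul : ∀ j (a : Matrix (Fin d) (Fin d) ℂ) (x y : E j),
      mI j x (MulOpposite.op a • y) = mI j x y * a)
    (h_star : ∀ j (x y : E j), star (mI j x y) = mI j y x)
    (h_pos : ∀ j (x : E j), (mI j x x).PosSemidef)
    (h_def : ∀ j (x : E j), mI j x x = 0 → x = 0)
    (φ : ∀ j, Matrix (Fin d) (Fin d) ℂ → E j)
    (x : Fin n → Matrix (Fin d) (Fin d) ℂ)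
    (h : (Fin n → Matrix (Fin d) (Fin d) ℂ) → ℝ) (hh : ∀ v, 0 ≤ h v)
    (g₁ : (E 0 →ₗ[ℂ] E (L - 1)) → ℝ) (hg₁ : ∀ T, 0 ≤ g₁ T)
    (g₂ : ℝ → ℝ) (hg₂nonneg : ∀ a, 0 ≤ g₂ a)
    (hg₂mono : ∀ a b : ℝ, 0 ≤ a → a ≤ b → g₂ a ≤ g₂ b)
    (Pf : (∀ j, E j) → (E 0 →ₗ[ℂ] E (L - 1)))
    (hPf : ∀ (f : ∀ j, E j) (i : Fin n),
      Pf f (φ 0 (x i)) =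
        φ (L - 1) (iterSeq (fun j a => mI j (φ j a) (f j)) (L - 1) (x i)))
    (hPdet : ∀ f f' : ∀ j, E j,
      (∀ i, Pf f (φ 0 (x i)) = Pf f' (φ 0 (x i))) → Pf f = Pf f')
    (obj : (∀ j, E j) → ℝ)
    (hobj : ∀ f, obj f =
      h (fun i => iterSeq (fun j a => mI j (φ j a) (f j)) L (x i)) +
        g₁ (Pf f) + g₂ (Real.sqrt ‖mI (L - 1) (f (L - 1)) (f (L - 1))‖))
    (hexists : ∃ fmin, ∀ f, obj fmin ≤ obj f) :
    ∃ fstar : ∀ j, E j, (∀ f, obj fstar ≤ obj f) ∧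
      ∀ j < L, ∃ c : Fin n → Matrix (Fin d) (Fin d) ℂ,
        fstar j = ∑ i, MulOpposite.op (c i) •
          φ j (iterSeq (fun j' a => mI j' (φ j' a) (fstar j')) j (x i)) :=
  stmt11_general mI h_add h_smul h_opsmul h_star h_pos h_def φ x h g₁ g₂ hg₂mono Pf hPf hPdet obj
    hobj hexists
end

section
/- Let [φ_j(x_1^{j-1}),...,φ_j(x_n^{j-1})] R_j = Q_j be a QR decomposition (Q_j has orthonormal columns in the Hilbert C*-module sense, R_j ∈ A^{n×n}) for j = 1 and j = L, and let G_L ∈ A^{n×n} be the Gram matrix with (i,l)-entry k_L(x_i^{L-1}, x_l^{L-1}). Then the operator norm of the restricted composed Perron–Frobenius operator satisfies ‖P_{f_{L-1}} ⋯ P_{f_1}|_{Ṽ(x)}‖_op = ‖R_L* G_L R_1‖_op. -/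
/-!
Flatten everything over `A = ℂ^{d×d}` into complex matrices. If `Q = [x] R` has orthonormal
columns, then `Rᴴ G R = 1` for the Gram matrix `G` of `x`, so `G = Sᴴ S` with `S = Rᴴ G` and
`R S = 1`; hence `√‖⟨∑ xᵢ cᵢ, ∑ xᵢ cᵢ⟩‖ = ‖S c‖` for the stacked block column `c`. Applied to
`vᵢ` and to `wᵢ = T vᵢ`, the norm of `T (∑ vᵢ cᵢ)` is `‖S_L c‖ = ‖(S_L R₁) (S₁ c)‖`. As `c` ranges
over the unit ball of `Ṽ(x)`, `S₁ c` ranges over all `nd × d` matrices of norm `≤ 1`, and the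
supremum of `‖(S_L R₁) B‖` over those is `‖S_L R₁‖`, the flattening of `R_Lᴴ G_L R₁`.
-/

open Matrix ComplexOrder
open scoped Matrix.Norms.L2Operator

/-- The canonical norm on `n × n` matrices over `A = ℂ^{d×d}`, obtained by flattening into an
`nd × nd` complex matrix and taking the operator norm. -/
noncomputable def blockOpNorm {n d : ℕ}
    (M : Matrix (Fin n) (Fin n) (Matrix (Fin d) (Fin d) ℂ)) : ℝ :=
  ‖(Matrix.of fun (p q : Fin n × Fin d) => M p.1 q.1 p.2 q.2 :
      Matrix (Fin n × Fin d) (Fin n × Fin d) ℂ)‖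

open MulOpposite

theorem Function.Surjective.iSup_subtype_congr {α β γ : Type*} [SupSet γ] {p : α → Prop}
    {q : β → Prop} {f : {a // p a} → γ} {g : β → γ} {φ : α → β} (hφ : Function.Surjective φ)
    (hpq : ∀ a, p a ↔ q (φ a)) (hfg : ∀ a, f a = g (φ a)) :
    ⨆ a, f a = ⨆ b : {b // q b}, g b := by
  refine Function.Surjective.iSup_congr (fun a => ⟨φ a, (hpq a).1 a.2⟩) ?_ fun a => (hfg a).symm
  rintro ⟨b, hb⟩
  obtain ⟨a, rfl⟩ := hφ b
  exact ⟨⟨a, (hpq a).2 hb⟩, rfl⟩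

namespace Matrix

section Composition

variable {ι κ κ' R : Type*}

def blockCol (c : ι → Matrix κ κ' R) : Matrix (ι × κ) κ' R :=
  of fun p q => c p.1 p.2 q

theorem blockCol_surjective : Function.Surjective (blockCol : (ι → Matrix κ κ' R) → _) :=
  fun C => ⟨fun i => of fun s t => C (i, s) t, rfl⟩

theorem comp_mul [Fintype ι] [Fintype κ] [NonUnitalNonAssocSemiring R]
    (M N : Matrix ι ι (Matrix κ κ R)) :
    comp ι ι κ κ R (M * N) = comp ι ι κ κ R M * comp ι ι κ κ R N :=
  map_mul (compRingEquiv ι κ R) M N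

theorem comp_conjTranspose [Star R] (M : Matrix ι ι (Matrix κ κ R)) :
    comp ι ι κ κ R Mᴴ = (comp ι ι κ κ R M)ᴴ :=
  rfl

theorem comp_conjTranspose_mul_mul_eq_one [Fintype ι] [DecidableEq ι] [Fintype κ]
    [DecidableEq κ] [Semiring R] [Star R] {P G : Matrix ι ι (Matrix κ κ R)}
    (h : Pᴴ * G * P = 1) : (comp ι ι κ κ R P)ᴴ * comp ι ι κ κ R G * comp ι ι κ κ R P = 1 := by
  rw [← comp_conjTranspose, ← comp_mul, ← comp_mul, h, comp_one]

theorem sum_sum_conjTranspose_mul_mul_eq [Fintype ι] [Fintype κ] [NonUnitalSemiring R] [Star R]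
    (G : Matrix ι ι (Matrix κ κ R)) (b c : ι → Matrix κ κ' R) :
    ∑ i, ∑ l, (b i)ᴴ * G i l * c l = (blockCol b)ᴴ * comp ι ι κ κ R G * blockCol c := by
  ext p q
  simp only [Matrix.sum_apply, mul_apply, conjTranspose_apply, blockCol, comp_apply, of_apply,
    Fintype.sum_prod_type, Finset.sum_mul]
  rw [Finset.sum_comm]
  refine Finset.sum_congr rfl fun l _ => ?_
  rw [Finset.sum_comm]

end Composition

theorem conjTranspose_mul_mul_apply {ι A : Type*} [Fintype ι] [NonUnitalNonAssocSemiring A]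
    [Star A] (X G Y : Matrix ι ι A) (a b : ι) :
    (Xᴴ * G * Y) a b = ∑ i, ∑ l, star (X i a) * G i l * Y l b := by
  simp only [mul_apply, conjTranspose_apply, Finset.sum_mul]
  exact Finset.sum_comm

theorem eq_conjTranspose_mul_self_of_conjTranspose_mul_mul_eq_one {m R : Type*} [Fintype m]
    [DecidableEq m] [CommRing R] [StarRing R] {P G : Matrix m m R} (h : Pᴴ * G * P = 1) :
    G = (Pᴴ * G)ᴴ * (Pᴴ * G) := by
  have hPS : P * (Pᴴ * G) = 1 := mul_eq_one_comm.mp h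
  calc G = (P * (Pᴴ * G))ᴴ * G * (P * (Pᴴ * G)) := by rw [hPS]; simp
    _ = (Pᴴ * G)ᴴ * (Pᴴ * G * P) * (Pᴴ * G) := by simp only [conjTranspose_mul, mul_assoc]
    _ = (Pᴴ * G)ᴴ * (Pᴴ * G) := by rw [h, mul_one]

variable {l m k : Type*} [Fintype l] [Fintype m] [Fintype k] [DecidableEq m] [DecidableEq k]

omit [DecidableEq m] in
theorem l2_opNorm_vecMulVec_single_le (y : EuclideanSpace ℂ m) (j : k) :
    ‖vecMulVec (y : m → ℂ) (Pi.single j 1)‖ ≤ ‖y‖ := by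
  rw [l2_opNorm_def]
  refine ContinuousLinearMap.opNorm_le_bound _ (norm_nonneg y) fun z => ?_
  change ‖(EuclideanSpace.equiv m ℂ).symm (vecMulVec (y : m → ℂ) (Pi.single j 1) *ᵥ z)‖ ≤ _
  rw [vecMulVec_mulVec, single_one_dotProduct, op_smul_eq_smul, map_smul, norm_smul, mul_comm]
  exact mul_le_mul_of_nonneg_left (PiLp.norm_apply_le z j) (norm_nonneg y)

theorem iSup_l2_opNorm_mul [Nonempty k] (N : Matrix l m ℂ) :
    ⨆ B : {B : Matrix m k ℂ // ‖B‖ ≤ 1}, ‖N * B.1‖ = ‖N‖ := by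
  have hle (B : {B : Matrix m k ℂ // ‖B‖ ≤ 1}) : ‖N * B.1‖ ≤ ‖N‖ :=
    (l2_opNorm_mul N B.1).trans (mul_le_of_le_one_right (norm_nonneg N) B.2)
  have : Nonempty {B : Matrix m k ℂ // ‖B‖ ≤ 1} := ⟨⟨0, by simp⟩⟩
  have hbdd : BddAbove (Set.range fun B : {B : Matrix m k ℂ // ‖B‖ ≤ 1} => ‖N * B.1‖) :=
    ⟨‖N‖, Set.forall_mem_range.2 hle⟩
  refine le_antisymm (ciSup_le hle) ?_
  rw [l2_opNorm_def]
  refine ContinuousLinearMap.opNorm_le_of_unit_norm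
    ((norm_nonneg _).trans (le_ciSup hbdd ⟨0, by simp⟩)) fun y hy => ?_
  -- test `N` against the rank-one contraction `y e_jᵀ`
  let j : k := Classical.arbitrary k
  let B : {B : Matrix m k ℂ // ‖B‖ ≤ 1} :=
    ⟨vecMulVec (y : m → ℂ) (Pi.single j 1), hy ▸ l2_opNorm_vecMulVec_single_le y j⟩
  calc _ = ‖(EuclideanSpace.equiv l ℂ).symm
          ((N * B.1) *ᵥ (EuclideanSpace.single j 1 : EuclideanSpace ℂ k))‖ := by
        change ‖(EuclideanSpace.equiv l ℂ).symm (N *ᵥ y)‖ = _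
        rw [← mulVec_mulVec, PiLp.ofLp_single, vecMulVec_mulVec]
        simp
    _ ≤ ‖N * B.1‖ * ‖(EuclideanSpace.single j 1 : EuclideanSpace ℂ k)‖ := l2_opNorm_mulVec _ _
    _ ≤ _ := by
      rw [PiLp.norm_single, norm_one, mul_one]
      exact le_ciSup hbdd B

theorem iSup_l2_opNorm_mul_prod (N : Matrix l (m × k) ℂ) :
    ⨆ B : {B : Matrix (m × k) k ℂ // ‖B‖ ≤ 1}, ‖N * B.1‖ = ‖N‖ := by
  cases isEmpty_or_nonempty k
  · have hN : N = 0 := ext fun _ p => isEmptyElim p.2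
    simp [hN]
  · exact iSup_l2_opNorm_mul N

end Matrix

section HilbertModule

variable {A E ι : Type*} [Fintype ι] [AddCommMonoid E]

theorem inner_sum_op_smul_sum [Ring A] [StarRing A] [SMul Aᵐᵒᵖ E] (mI : E → E → A)
    (h_add : ∀ x y z, mI x (y + z) = mI x y + mI x z)
    (h_opsmul : ∀ (a : A) (x y : E), mI x (op a • y) = mI x y * a)
    (h_star : ∀ x y, star (mI x y) = mI y x) (x y : ι → E) (a b : ι → A) :
    mI (∑ i, op (a i) • x i) (∑ l, op (b l) • y l) =
      ∑ i, ∑ l, star (a i) * mI (x i) (y l) * b l := by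
  have map_sum_right (u : E) (g : ι → E) : mI u (∑ l, g l) = ∑ l, mI u (g l) :=
    map_sum (AddMonoidHom.mk' (mI u) (h_add u)) g Finset.univ
  have map_sum_left (g : ι → E) (u : E) : mI (∑ i, g i) u = ∑ i, mI (g i) u := by
    rw [← h_star, map_sum_right, star_sum]
    simp only [h_star]
  have op_smul_left (c : A) (u v : E) : mI (op c • u) v = star c * mI u v := by
    rw [← h_star, h_opsmul, star_mul, h_star]
  simp only [map_sum_left, map_sum_right, h_opsmul, op_smul_left]

theorem conjTranspose_mul_gram_mul_eq_one [DecidableEq ι] [Ring A] [StarRing A] [SMul Aᵐᵒᵖ E]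
    (mI : E → E → A) (h_add : ∀ x y z, mI x (y + z) = mI x y + mI x z)
    (h_opsmul : ∀ (a : A) (x y : E), mI x (op a • y) = mI x y * a)
    (h_star : ∀ x y, star (mI x y) = mI y x) (x Q : ι → E) (R : Matrix ι ι A)
    (hQR : ∀ j, Q j = ∑ i, op (R i j) • x i)
    (hQ : ∀ i j, mI (Q i) (Q j) = if i = j then 1 else 0) :
    Rᴴ * (of fun i l => mI (x i) (x l)) * R = 1 := by
  ext a b
  rw [conjTranspose_mul_mul_apply, one_apply, ← hQ, hQR, hQR,
    inner_sum_op_smul_sum mI h_add h_opsmul h_star]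
  rfl

theorem sqrt_norm_inner_sum_eq {κ : Type*} [DecidableEq ι] [Fintype κ] [DecidableEq κ]
    [SMul (Matrix κ κ ℂ)ᵐᵒᵖ E] (mI : E → E → Matrix κ κ ℂ)
    (h_add : ∀ x y z, mI x (y + z) = mI x y + mI x z)
    (h_opsmul : ∀ (a : Matrix κ κ ℂ) (x y : E), mI x (op a • y) = mI x y * a)
    (h_star : ∀ x y, star (mI x y) = mI y x) (x : ι → E) (P : Matrix (ι × κ) (ι × κ) ℂ)
    (hP : Pᴴ * comp ι ι κ κ ℂ (of fun i l => mI (x i) (x l)) * P = 1)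
    (c : ι → Matrix κ κ ℂ) :
    √‖mI (∑ i, op (c i) • x i) (∑ i, op (c i) • x i)‖ =
      ‖Pᴴ * comp ι ι κ κ ℂ (of fun i l => mI (x i) (x l)) * blockCol c‖ := by
  set S := Pᴴ * comp ι ι κ κ ℂ (of fun i l => mI (x i) (x l))
  have hG := eq_conjTranspose_mul_self_of_conjTranspose_mul_mul_eq_one hP
  have hform := sum_sum_conjTranspose_mul_mul_eq (of fun i l => mI (x i) (x l)) c c
  simp only [of_apply] at hform
  rw [inner_sum_op_smul_sum mI h_add h_opsmul h_star]
  simp only [star_eq_conjTranspose]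
  rw [hform, hG,
    show (blockCol c)ᴴ * (Sᴴ * S) * blockCol c = (S * blockCol c)ᴴ * (S * blockCol c) by
      simp only [conjTranspose_mul, Matrix.mul_assoc],
    l2_opNorm_conjTranspose_mul_self, Real.sqrt_mul_self (norm_nonneg _)]

end HilbertModule

theorem stmt13_general {d n : ℕ} {E F : Type*}
    [AddCommGroup E] [Module ℂ E] [Module (Matrix (Fin d) (Fin d) ℂ)ᵐᵒᵖ E]
    [AddCommGroup F] [Module ℂ F] [Module (Matrix (Fin d) (Fin d) ℂ)ᵐᵒᵖ F]
    (mIE : E → E → Matrix (Fin d) (Fin d) ℂ) (mIF : F → F → Matrix (Fin d) (Fin d) ℂ)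
    (hE_add : ∀ x y z, mIE x (y + z) = mIE x y + mIE x z)
    (hE_opsmul : ∀ (a : Matrix (Fin d) (Fin d) ℂ) (x y : E),
      mIE x (MulOpposite.op a • y) = mIE x y * a)
    (hE_star : ∀ x y, star (mIE x y) = mIE y x)
    (hF_add : ∀ x y z, mIF x (y + z) = mIF x y + mIF x z)
    (hF_opsmul : ∀ (a : Matrix (Fin d) (Fin d) ℂ) (x y : F),
      mIF x (MulOpposite.op a • y) = mIF x y * a)
    (hF_star : ∀ x y, star (mIF x y) = mIF y x)
    (T : E →ₗ[ℂ] F)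
    (hTlin : ∀ (a : Matrix (Fin d) (Fin d) ℂ) (u : E),
      T (MulOpposite.op a • u) = MulOpposite.op a • T u)
    (v : Fin n → E) (w : Fin n → F) (hT : ∀ i, T (v i) = w i)
    (R1 RL : Matrix (Fin n) (Fin n) (Matrix (Fin d) (Fin d) ℂ))
    (Q1 : Fin n → E) (QL : Fin n → F)
    (hQR1 : ∀ j, Q1 j = ∑ i, MulOpposite.op (R1 i j) • v i)
    (hON1 : ∀ i j, mIE (Q1 i) (Q1 j) = if i = j then 1 else 0)
    (hQRL : ∀ j, QL j = ∑ i, MulOpposite.op (RL i j) • w i)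
    (hONL : ∀ i j, mIF (QL i) (QL j) = if i = j then 1 else 0) :
    (⨆ c : {c : Fin n → Matrix (Fin d) (Fin d) ℂ //
        Real.sqrt ‖mIE (∑ i, MulOpposite.op (c i) • v i)
          (∑ i, MulOpposite.op (c i) • v i)‖ ≤ 1},
      Real.sqrt ‖mIF (T (∑ i, MulOpposite.op (c.1 i) • v i))
        (T (∑ i, MulOpposite.op (c.1 i) • v i))‖) =
    blockOpNorm (RLᴴ * (Matrix.of fun i l => mIF (w i) (w l)) * R1) := by
  have hR1 := comp_conjTranspose_mul_mul_eq_one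
    (conjTranspose_mul_gram_mul_eq_one mIE hE_add hE_opsmul hE_star v Q1 R1 hQR1 hON1)
  have hRL := comp_conjTranspose_mul_mul_eq_one
    (conjTranspose_mul_gram_mul_eq_one mIF hF_add hF_opsmul hF_star w QL RL hQRL hONL)
  set C1 := comp _ _ _ _ ℂ R1
  set S1 := C1ᴴ * comp _ _ _ _ ℂ (of fun i l => mIE (v i) (v l))
  set SL := (comp _ _ _ _ ℂ RL)ᴴ * comp _ _ _ _ ℂ (of fun i l => mIF (w i) (w l))
  have hC1S1 : C1 * S1 = 1 := mul_eq_one_comm.mp hR1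
  have hT_sum (c : Fin n → Matrix (Fin d) (Fin d) ℂ) :
      T (∑ i, op (c i) • v i) = ∑ i, op (c i) • w i := by
    simp only [map_sum, hTlin, hT]
  have hsurj :
      Function.Surjective fun c : Fin n → Matrix (Fin d) (Fin d) ℂ => S1 * blockCol c := by
    intro B
    obtain ⟨c, hc⟩ := blockCol_surjective (C1 * B)
    refine ⟨c, ?_⟩
    change S1 * blockCol c = B
    rw [hc, ← Matrix.mul_assoc, hR1, Matrix.one_mul]
  calc _ = ⨆ B : {B : Matrix (Fin n × Fin d) (Fin d) ℂ // ‖B‖ ≤ 1}, ‖SL * C1 * B.1‖ := by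
        refine hsurj.iSup_subtype_congr (g := fun B => ‖SL * C1 * B‖) (fun c => ?_) fun c => ?_
        · rw [sqrt_norm_inner_sum_eq mIE hE_add hE_opsmul hE_star v _ hR1]
        rw [hT_sum, sqrt_norm_inner_sum_eq mIF hF_add hF_opsmul hF_star w _ hRL,
          Matrix.mul_assoc SL C1, ← Matrix.mul_assoc C1, hC1S1, Matrix.one_mul]
    _ = ‖SL * C1‖ := iSup_l2_opNorm_mul_prod _
    _ = blockOpNorm _ := by
        change _ = ‖comp _ _ _ _ ℂ _‖
        rw [comp_mul, comp_mul, comp_conjTranspose]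

/-- Let `v i = φ₁ xᵢ` in a Hilbert C*-module `E` over `A = ℂ^{d×d}` and
`w i = φ_L (xᵢ^{L-1})` in a Hilbert C*-module `F`, and let `T` be the (bounded `A`-linear)
composed Perron–Frobenius operator, so `T (v i) = w i`.  Let `[v] R₁ = Q₁` and `[w] R_L = Q_L`
be QR decompositions (orthonormal columns in the Hilbert C*-module sense, `R_j ∈ A^{n×n}`),
and let `G_L ∈ A^{n×n}` be the Gram matrix of the `w i`.  Then the operator norm of `T`
restricted to the submodule `Ṽ(x)` generated by `v₁,…,vₙ` equals `‖R_Lᴴ G_L R₁‖`. -/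
theorem stmt13 {d n : ℕ} {E F : Type*}
    [AddCommGroup E] [Module ℂ E] [Module (Matrix (Fin d) (Fin d) ℂ)ᵐᵒᵖ E]
    [AddCommGroup F] [Module ℂ F] [Module (Matrix (Fin d) (Fin d) ℂ)ᵐᵒᵖ F]
    (mIE : E → E → Matrix (Fin d) (Fin d) ℂ) (mIF : F → F → Matrix (Fin d) (Fin d) ℂ)
    (hE_add : ∀ x y z, mIE x (y + z) = mIE x y + mIE x z)
    (hE_smul : ∀ (z : ℂ) (x y : E), mIE x (z • y) = z • mIE x y)
    (hE_opsmul : ∀ (a : Matrix (Fin d) (Fin d) ℂ) (x y : E),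
      mIE x (MulOpposite.op a • y) = mIE x y * a)
    (hE_star : ∀ x y, star (mIE x y) = mIE y x)
    (hE_pos : ∀ x, (mIE x x).PosSemidef)
    (hF_add : ∀ x y z, mIF x (y + z) = mIF x y + mIF x z)
    (hF_smul : ∀ (z : ℂ) (x y : F), mIF x (z • y) = z • mIF x y)
    (hF_opsmul : ∀ (a : Matrix (Fin d) (Fin d) ℂ) (x y : F),
      mIF x (MulOpposite.op a • y) = mIF x y * a)
    (hF_star : ∀ x y, star (mIF x y) = mIF y x)
    (hF_pos : ∀ x, (mIF x x).PosSemidef)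
    (T : E →ₗ[ℂ] F)
    (hTlin : ∀ (a : Matrix (Fin d) (Fin d) ℂ) (u : E),
      T (MulOpposite.op a • u) = MulOpposite.op a • T u)
    (v : Fin n → E) (w : Fin n → F) (hT : ∀ i, T (v i) = w i)
    (R1 RL : Matrix (Fin n) (Fin n) (Matrix (Fin d) (Fin d) ℂ))
    (Q1 : Fin n → E) (QL : Fin n → F)
    (hQR1 : ∀ j, Q1 j = ∑ i, MulOpposite.op (R1 i j) • v i)
    (hON1 : ∀ i j, mIE (Q1 i) (Q1 j) = if i = j then 1 else 0)
    (hQRL : ∀ j, QL j = ∑ i, MulOpposite.op (RL i j) • w i)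
    (hONL : ∀ i j, mIF (QL i) (QL j) = if i = j then 1 else 0) :
    (⨆ c : {c : Fin n → Matrix (Fin d) (Fin d) ℂ //
        Real.sqrt ‖mIE (∑ i, MulOpposite.op (c i) • v i)
          (∑ i, MulOpposite.op (c i) • v i)‖ ≤ 1},
      Real.sqrt ‖mIF (T (∑ i, MulOpposite.op (c.1 i) • v i))
        (T (∑ i, MulOpposite.op (c.1 i) • v i))‖) =
    blockOpNorm (RLᴴ * (Matrix.of fun i l => mIF (w i) (w l)) * R1) :=
  stmt13_general mIE mIF hE_add hE_opsmul hE_star hF_add hF_opsmul hF_star T hTlin v w hT R1 RL Q1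
    QL hQR1 hON1 hQRL hONL
end

section
/- With the notation of the previous statement, if the Gram matrix G_L is invertible, then ‖P_{f_{L-1}} ⋯ P_{f_1}|_{Ṽ(x)}‖_op ≤ ‖G_L^{-1}‖_op^{1/2} · ‖G_L‖_op · ‖G_1^{-1}‖_op^{1/2}. -/
/-!
Write a vector of the span as `u = ∑ vᵢ cᵢ` and flatten the coefficients into a column `C`.
Then `⟨u, u⟩ = Cᴴ Ĝ₁ C` and `⟨T u, T u⟩ = Cᴴ Ĝ_L C`, where `Ĝ` is the `nd × nd` matrix of a
Gram matrix `G`. Orthonormality of `Q₁ = v R₁` says `R̂₁ᴴ Ĝ₁ R̂₁ = 1`, so `Ĝ₁⁻¹ = R̂₁ R̂₁ᴴ`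
and `‖C‖² ≤ ‖R̂₁‖² ‖R̂₁⁻¹ C‖² = ‖Ĝ₁⁻¹‖ ‖Cᴴ Ĝ₁ C‖`. Hence `‖⟨T u, T u⟩‖ ≤ ‖Ĝ_L‖ ‖Ĝ₁⁻¹‖` when
`‖⟨u, u⟩‖ ≤ 1`; finally `√‖Ĝ_L‖ ≤ √‖Ĝ_L⁻¹‖ ‖Ĝ_L‖` since `‖Ĝ_L‖ ≤ ‖Ĝ_L⁻¹‖ ‖Ĝ_L‖²`.
-/

open Matrix ComplexOrder
open scoped Matrix.Norms.L2Operator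

namespace Matrix

section Block

variable {ι κ μ α : Type*} [Fintype ι] [Fintype κ]

def blockColumn (b : ι → Matrix κ μ α) : Matrix (ι × κ) μ α :=
  of fun p m => b p.1 p.2 m

variable [CommSemiring α] [StarRing α]

theorem sum_sum_star_mul_mul_eq_blockColumn (G : Matrix ι ι (Matrix κ κ α))
    (b c : ι → Matrix κ κ α) :
    ∑ i, ∑ l, star (b i) * G i l * c l =
      (blockColumn b)ᴴ * comp ι ι κ κ α G * blockColumn c := by
  ext a e
  simp only [blockColumn, sum_apply, mul_apply, conjTranspose_apply, of_apply, comp_apply,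
    star_apply, Fintype.sum_prod_type, Finset.sum_mul]
  rw [Finset.sum_comm]
  exact Finset.sum_congr rfl fun i _ => Finset.sum_comm

theorem comp_conjTranspose_mul_mul (G R : Matrix ι ι (Matrix κ κ α)) :
    comp ι ι κ κ α (Rᴴ * G * R) =
      (comp ι ι κ κ α R)ᴴ * comp ι ι κ κ α G * comp ι ι κ κ α R := by
  simp only [← compRingEquiv_apply, map_mul]
  rfl

end Block

end Matrix

/-- An `A`-valued inner product on a right `A`-module, without the positivity axiom. -/
structure IsRightHermitianForm {A E : Type*} [Ring A] [StarRing A] [AddCommGroup E]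
    [Module Aᵐᵒᵖ E] (inner : E → E → A) : Prop where
  map_add_right : ∀ x y z, inner x (y + z) = inner x y + inner x z
  map_op_smul_right : ∀ (a : A) x y, inner x (MulOpposite.op a • y) = inner x y * a
  star_map : ∀ x y, star (inner x y) = inner y x

namespace IsRightHermitianForm

variable {ι A E : Type*} [Fintype ι] [Ring A] [StarRing A] [AddCommGroup E] [Module Aᵐᵒᵖ E]
  {inner : E → E → A}

theorem map_sum_op_smul_right (h : IsRightHermitianForm inner) (x : E) (c : ι → A) (y : ι → E) :
    inner x (∑ l, MulOpposite.op (c l) • y l) = ∑ l, inner x (y l) * c l := by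
  calc inner x (∑ l, MulOpposite.op (c l) • y l) = ∑ l, inner x (MulOpposite.op (c l) • y l) :=
        map_sum (AddMonoidHom.mk' (inner x) (h.map_add_right x)) _ _
    _ = ∑ l, inner x (y l) * c l := Finset.sum_congr rfl fun l _ => h.map_op_smul_right _ _ _

theorem map_sum_op_smul_sum_op_smul (h : IsRightHermitianForm inner) (b c : ι → A) (x : ι → E) :
    inner (∑ i, MulOpposite.op (b i) • x i) (∑ l, MulOpposite.op (c l) • x l) =
      ∑ i, ∑ l, star (b i) * inner (x i) (x l) * c l := by
  have h_left : ∀ l, inner (∑ i, MulOpposite.op (b i) • x i) (x l) =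
      ∑ i, star (b i) * inner (x i) (x l) := fun l => by
    rw [← h.star_map, h.map_sum_op_smul_right, star_sum]
    simp only [star_mul, h.star_map]
  simp only [h.map_sum_op_smul_right, h_left, Finset.sum_mul]
  exact Finset.sum_comm

theorem conjTranspose_mul_gram_mul_eq_one [DecidableEq ι] (h : IsRightHermitianForm inner)
    {x Q : ι → E} {R : Matrix ι ι A} (hQ : ∀ j, Q j = ∑ i, MulOpposite.op (R i j) • x i)
    (hQ_orthonormal : ∀ i j, inner (Q i) (Q j) = if i = j then 1 else 0) :
    Rᴴ * of (fun i l => inner (x i) (x l)) * R = 1 := by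
  ext1 j j'
  rw [one_apply, ← hQ_orthonormal, hQ, hQ, h.map_sum_op_smul_sum_op_smul]
  simp only [mul_apply, conjTranspose_apply, of_apply, Finset.sum_mul]
  exact Finset.sum_comm

theorem map_sum_op_smul_self_eq_blockColumn {κ α : Type*} [Fintype κ] [DecidableEq κ]
    [CommRing α] [StarRing α] [Module (Matrix κ κ α)ᵐᵒᵖ E] {inner : E → E → Matrix κ κ α}
    (h : IsRightHermitianForm inner) (c : ι → Matrix κ κ α) (x : ι → E) :
    inner (∑ i, MulOpposite.op (c i) • x i) (∑ i, MulOpposite.op (c i) • x i) =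
      (blockColumn c)ᴴ * comp ι ι κ κ α (of fun i l => inner (x i) (x l)) * blockColumn c :=
  (h.map_sum_op_smul_sum_op_smul c c x).trans (sum_sum_star_mul_mul_eq_blockColumn _ c c)

end IsRightHermitianForm

theorem RingEquiv.map_ringInverse {R S : Type*} [Semiring R] [Semiring S] (e : R ≃+* S) (a : R) :
    e (Ring.inverse a) = Ring.inverse (e a) := by
  by_cases ha : IsUnit a
  · have h_left : e (Ring.inverse a) * e a = 1 := by
      rw [← map_mul, Ring.inverse_mul_cancel a ha, map_one]
    calc e (Ring.inverse a) = e (Ring.inverse a) * (e a * Ring.inverse (e a)) := by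
          rw [Ring.mul_inverse_cancel _ (ha.map e), mul_one]
      _ = Ring.inverse (e a) := by rw [← mul_assoc, h_left, one_mul]
  · rw [Ring.inverse_non_unit a ha, Ring.inverse_non_unit _ ((isUnit_map_iff e a).not.mpr ha),
      map_zero]

theorem IsUnit.sqrt_norm_le_sqrt_norm_ringInverse_mul_norm {R : Type*} [NormedRing R] {a : R}
    (ha : IsUnit a) : √‖a‖ ≤ √‖Ring.inverse a‖ * ‖a‖ := by
  have h : ‖a‖ ≤ ‖Ring.inverse a‖ * ‖a‖ ^ 2 :=
    calc ‖a‖ = ‖a * Ring.inverse a * a‖ := by rw [Ring.mul_inverse_cancel a ha, one_mul]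
      _ ≤ ‖a‖ * ‖Ring.inverse a‖ * ‖a‖ := norm_mul₃_le
      _ = ‖Ring.inverse a‖ * ‖a‖ ^ 2 := by ring
  calc √‖a‖ ≤ √(‖Ring.inverse a‖ * ‖a‖ ^ 2) := Real.sqrt_le_sqrt h
    _ = √‖Ring.inverse a‖ * ‖a‖ := by
        rw [Real.sqrt_mul (norm_nonneg _), Real.sqrt_sq (norm_nonneg _)]

namespace Matrix

variable {m q 𝕜 : Type*} [Fintype m] [Fintype q] [DecidableEq m] [DecidableEq q] [RCLike 𝕜]

theorem l2_opNorm_mul_conjTranspose_self (A : Matrix m q 𝕜) : ‖A * Aᴴ‖ = ‖A‖ * ‖A‖ := by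
  simpa only [conjTranspose_conjTranspose, l2_opNorm_conjTranspose] using
    l2_opNorm_conjTranspose_mul_self Aᴴ

theorem l2_opNorm_conjTranspose_mul_mul_le_of_conjTranspose_mul_mul_eq_one {G G₁ R : Matrix m m 𝕜}
    (hR : Rᴴ * G₁ * R = 1) (C : Matrix m q 𝕜) :
    ‖Cᴴ * G * C‖ ≤ ‖G‖ * ‖G₁⁻¹‖ * ‖Cᴴ * G₁ * C‖ := by
  obtain ⟨S, hSR⟩ : ∃ S, S * R = 1 := ⟨Rᴴ * G₁, hR⟩
  have hRS : R * S = 1 := mul_eq_one_comm.mp hSR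
  have hG₁ : G₁ = Sᴴ * S :=
    calc G₁ = (R * S)ᴴ * G₁ * (R * S) := by rw [hRS, conjTranspose_one, one_mul, mul_one]
      _ = Sᴴ * (Rᴴ * G₁ * R) * S := by simp only [conjTranspose_mul, Matrix.mul_assoc]
      _ = Sᴴ * S := by rw [hR, Matrix.mul_one]
  have hG₁_inv : G₁⁻¹ = R * Rᴴ :=
    inv_eq_left_inv (by rw [hG₁, ← Matrix.mul_assoc, Matrix.mul_assoc R, ← conjTranspose_mul, hSR,
      conjTranspose_one, Matrix.mul_one, hRS])
  have hC : ‖C‖ ≤ ‖R‖ * ‖S * C‖ :=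
    calc ‖C‖ = ‖R * (S * C)‖ := by rw [← Matrix.mul_assoc, hRS, Matrix.one_mul]
      _ ≤ ‖R‖ * ‖S * C‖ := l2_opNorm_mul _ _
  have hC_form : Cᴴ * G₁ * C = (S * C)ᴴ * (S * C) := by
    rw [hG₁, conjTranspose_mul]; simp only [Matrix.mul_assoc]
  calc ‖Cᴴ * G * C‖ ≤ ‖Cᴴ‖ * ‖G‖ * ‖C‖ :=
        (l2_opNorm_mul _ _).trans (mul_le_mul_of_nonneg_right (l2_opNorm_mul _ _) (norm_nonneg _))
    _ = ‖G‖ * (‖C‖ * ‖C‖) := by rw [l2_opNorm_conjTranspose]; ring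
    _ ≤ ‖G‖ * ((‖R‖ * ‖S * C‖) * (‖R‖ * ‖S * C‖)) := by gcongr
    _ = ‖G‖ * ‖G₁⁻¹‖ * ‖Cᴴ * G₁ * C‖ := by
        rw [hG₁_inv, hC_form, l2_opNorm_mul_conjTranspose_self, l2_opNorm_conjTranspose_mul_self]
        ring

end Matrix

theorem stmt14_general {d n : ℕ} {E F : Type*}
    [AddCommGroup E] [Module ℂ E] [Module (Matrix (Fin d) (Fin d) ℂ)ᵐᵒᵖ E]
    [AddCommGroup F] [Module ℂ F] [Module (Matrix (Fin d) (Fin d) ℂ)ᵐᵒᵖ F]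
    (mIE : E → E → Matrix (Fin d) (Fin d) ℂ) (mIF : F → F → Matrix (Fin d) (Fin d) ℂ)
    (hE_add : ∀ x y z, mIE x (y + z) = mIE x y + mIE x z)
    (hE_opsmul : ∀ (a : Matrix (Fin d) (Fin d) ℂ) (x y : E),
      mIE x (MulOpposite.op a • y) = mIE x y * a)
    (hE_star : ∀ x y, star (mIE x y) = mIE y x)
    (hF_add : ∀ x y z, mIF x (y + z) = mIF x y + mIF x z)
    (hF_opsmul : ∀ (a : Matrix (Fin d) (Fin d) ℂ) (x y : F),
      mIF x (MulOpposite.op a • y) = mIF x y * a)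
    (hF_star : ∀ x y, star (mIF x y) = mIF y x)
    (T : E →ₗ[ℂ] F)
    (hTlin : ∀ (a : Matrix (Fin d) (Fin d) ℂ) (u : E),
      T (MulOpposite.op a • u) = MulOpposite.op a • T u)
    (v : Fin n → E) (w : Fin n → F) (hT : ∀ i, T (v i) = w i)
    (R1 : Matrix (Fin n) (Fin n) (Matrix (Fin d) (Fin d) ℂ))
    (Q1 : Fin n → E)
    (hQR1 : ∀ j, Q1 j = ∑ i, MulOpposite.op (R1 i j) • v i)
    (hON1 : ∀ i j, mIE (Q1 i) (Q1 j) = if i = j then 1 else 0)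
    (hGL : IsUnit (Matrix.of fun i l => mIF (w i) (w l) :
      Matrix (Fin n) (Fin n) (Matrix (Fin d) (Fin d) ℂ))) :
    (⨆ c : {c : Fin n → Matrix (Fin d) (Fin d) ℂ //
        Real.sqrt ‖mIE (∑ i, MulOpposite.op (c i) • v i)
          (∑ i, MulOpposite.op (c i) • v i)‖ ≤ 1},
      Real.sqrt ‖mIF (T (∑ i, MulOpposite.op (c.1 i) • v i))
        (T (∑ i, MulOpposite.op (c.1 i) • v i))‖) ≤
    Real.sqrt (blockOpNorm (Ring.inverse (Matrix.of fun i l => mIF (w i) (w l)))) *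
      blockOpNorm (Matrix.of fun i l => mIF (w i) (w l)) *
      Real.sqrt (blockOpNorm (Ring.inverse (Matrix.of fun i l => mIE (v i) (v l)))) := by
  have hE : IsRightHermitianForm mIE := ⟨hE_add, hE_opsmul, hE_star⟩
  have hF : IsRightHermitianForm mIF := ⟨hF_add, hF_opsmul, hF_star⟩
  set G₁ : Matrix (Fin n) (Fin n) (Matrix (Fin d) (Fin d) ℂ) := of fun i l => mIE (v i) (v l)
  set G_L : Matrix (Fin n) (Fin n) (Matrix (Fin d) (Fin d) ℂ) := of fun i l => mIF (w i) (w l)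
  set φ := compRingEquiv (Fin n) (Fin d) ℂ
  have hR1 : (φ R1)ᴴ * φ G₁ * φ R1 = 1 := by
    rw [compRingEquiv_apply, compRingEquiv_apply, ← comp_conjTranspose_mul_mul,
      show R1ᴴ * G₁ * R1 = 1 from hE.conjTranspose_mul_gram_mul_eq_one hQR1 hON1, comp_one]
  have h_blockOpNorm (G) : blockOpNorm G = ‖φ G‖ := rfl
  rw [h_blockOpNorm, h_blockOpNorm, h_blockOpNorm, φ.map_ringInverse, φ.map_ringInverse,
    ← nonsing_inv_eq_ringInverse (φ G₁)]
  refine Real.iSup_le (fun ⟨c, hc⟩ => ?_) (by positivity)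
  have hTc : T (∑ i, MulOpposite.op (c i) • v i) = ∑ i, MulOpposite.op (c i) • w i := by
    simp only [map_sum, hTlin, hT]
  rw [hE.map_sum_op_smul_self_eq_blockColumn, Real.sqrt_le_one] at hc
  rw [hTc, hF.map_sum_op_smul_self_eq_blockColumn]
  calc √‖(blockColumn c)ᴴ * φ G_L * blockColumn c‖ ≤ √(‖φ G_L‖ * ‖(φ G₁)⁻¹‖) :=
        Real.sqrt_le_sqrt <|
          (l2_opNorm_conjTranspose_mul_mul_le_of_conjTranspose_mul_mul_eq_one hR1 _).trans
            (mul_le_of_le_one_right (by positivity) hc)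
    _ = √‖φ G_L‖ * √‖(φ G₁)⁻¹‖ := Real.sqrt_mul (norm_nonneg _) _
    _ ≤ √‖Ring.inverse (φ G_L)‖ * ‖φ G_L‖ * √‖(φ G₁)⁻¹‖ := by
        gcongr
        exact (hGL.map φ).sqrt_norm_le_sqrt_norm_ringInverse_mul_norm

/-- With the notation of Statement 13 (QR decompositions `[v] R₁ = Q₁`,
`[w] R_L = Q_L`, Gram matrices `G₁` of `v` and `G_L` of `w`, composed Perron–Frobenius
operator `T` with `T (v i) = w i`), if the Gram matrix `G_L` is invertible (and `G₁` is
invertible, so that the QR decompositions exist), then the operator norm of `T` restricted to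
the submodule generated by `v₁,…,vₙ` satisfies
`‖T|_Ṽ(x)‖ ≤ ‖G_L⁻¹‖^{1/2} ‖G_L‖ ‖G₁⁻¹‖^{1/2}`. -/
theorem stmt14 {d n : ℕ} {E F : Type*}
    [AddCommGroup E] [Module ℂ E] [Module (Matrix (Fin d) (Fin d) ℂ)ᵐᵒᵖ E]
    [AddCommGroup F] [Module ℂ F] [Module (Matrix (Fin d) (Fin d) ℂ)ᵐᵒᵖ F]
    (mIE : E → E → Matrix (Fin d) (Fin d) ℂ) (mIF : F → F → Matrix (Fin d) (Fin d) ℂ)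
    (hE_add : ∀ x y z, mIE x (y + z) = mIE x y + mIE x z)
    (hE_smul : ∀ (z : ℂ) (x y : E), mIE x (z • y) = z • mIE x y)
    (hE_opsmul : ∀ (a : Matrix (Fin d) (Fin d) ℂ) (x y : E),
      mIE x (MulOpposite.op a • y) = mIE x y * a)
    (hE_star : ∀ x y, star (mIE x y) = mIE y x)
    (hE_pos : ∀ x, (mIE x x).PosSemidef)
    (hF_add : ∀ x y z, mIF x (y + z) = mIF x y + mIF x z)
    (hF_smul : ∀ (z : ℂ) (x y : F), mIF x (z • y) = z • mIF x y)
    (hF_opsmul : ∀ (a : Matrix (Fin d) (Fin d) ℂ) (x y : F),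
      mIF x (MulOpposite.op a • y) = mIF x y * a)
    (hF_star : ∀ x y, star (mIF x y) = mIF y x)
    (hF_pos : ∀ x, (mIF x x).PosSemidef)
    (T : E →ₗ[ℂ] F)
    (hTlin : ∀ (a : Matrix (Fin d) (Fin d) ℂ) (u : E),
      T (MulOpposite.op a • u) = MulOpposite.op a • T u)
    (v : Fin n → E) (w : Fin n → F) (hT : ∀ i, T (v i) = w i)
    (R1 RL : Matrix (Fin n) (Fin n) (Matrix (Fin d) (Fin d) ℂ))
    (Q1 : Fin n → E) (QL : Fin n → F)
    (hQR1 : ∀ j, Q1 j = ∑ i, MulOpposite.op (R1 i j) • v i)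
    (hON1 : ∀ i j, mIE (Q1 i) (Q1 j) = if i = j then 1 else 0)
    (hQRL : ∀ j, QL j = ∑ i, MulOpposite.op (RL i j) • w i)
    (hONL : ∀ i j, mIF (QL i) (QL j) = if i = j then 1 else 0)
    (hGL : IsUnit (Matrix.of fun i l => mIF (w i) (w l) :
      Matrix (Fin n) (Fin n) (Matrix (Fin d) (Fin d) ℂ)))
    (hG1 : IsUnit (Matrix.of fun i l => mIE (v i) (v l) :
      Matrix (Fin n) (Fin n) (Matrix (Fin d) (Fin d) ℂ))) :
    (⨆ c : {c : Fin n → Matrix (Fin d) (Fin d) ℂ //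
        Real.sqrt ‖mIE (∑ i, MulOpposite.op (c i) • v i)
          (∑ i, MulOpposite.op (c i) • v i)‖ ≤ 1},
      Real.sqrt ‖mIF (T (∑ i, MulOpposite.op (c.1 i) • v i))
        (T (∑ i, MulOpposite.op (c.1 i) • v i))‖) ≤
    Real.sqrt (blockOpNorm (Ring.inverse (Matrix.of fun i l => mIF (w i) (w l)))) *
      blockOpNorm (Matrix.of fun i l => mIF (w i) (w l)) *
      Real.sqrt (blockOpNorm (Ring.inverse (Matrix.of fun i l => mIE (v i) (v l)))) :=
  stmt14_general mIE mIF hE_add hE_opsmul hE_star hF_add hF_opsmul hF_star T hTlin v w hT R1 Q1 hQR1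
    hON1 hGL
end
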